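/- (Sufficiency of the integrability conditions, case 2d ∉ ℕ.) For every λ ∈ ℝ and every t ∈ ℝ, the deformed action f ↦ 𝔏^λ_f + t·m_{f′} satisfies the homomorphism condition on 𝔬𝔰𝔭(2|2): for all homogeneous f, g ∈ 𝔬𝔰𝔭(2|2), 𝔏^λ_{{f,g}} + t·m_{{f,g}′} = (𝔏^λ_f + t·m_{f′})∘(𝔏^λ_g + t·m_{g′}) − (−1)^{|f||g|}(𝔏^λ_g + t·m_{g′})∘(𝔏^λ_f + t·m_{f′}). Thus the infinitesimal deformation of the module 𝔉_λ along the cocycle ω(f) = m_{f′} is a genuine deformation, of order 1 in t. -/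

import Mathlib

noncomputable section

namespace OSP

/-- Smooth real functions. -/
def Smooth (f : ℝ → ℝ) : Prop := ContDiff ℝ ((⊤ : ℕ∞) : WithTop ℕ∞) f

theorem Smooth.const (c : ℝ) : Smooth fun _ => c := contDiff_const
theorem Smooth.add {f g : ℝ → ℝ} (hf : Smooth f) (hg : Smooth g) :
    Smooth fun x => f x + g x := ContDiff.add hf hg
theorem Smooth.mul {f g : ℝ → ℝ} (hf : Smooth f) (hg : Smooth g) :
    Smooth fun x => f x * g x := ContDiff.mul hf hg
theorem Smooth.neg {f : ℝ → ℝ} (hf : Smooth f) : Smooth fun x => -(f x) := ContDiff.neg hf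
theorem Smooth.sub {f g : ℝ → ℝ} (hf : Smooth f) (hg : Smooth g) :
    Smooth fun x => f x - g x := ContDiff.sub hf hg
theorem Smooth.smul (r : ℝ) {f : ℝ → ℝ} (hf : Smooth f) :
    Smooth fun x => r * f x := (Smooth.const r).mul hf
theorem Smooth.deriv {f : ℝ → ℝ} (hf : Smooth f) : Smooth (deriv f) :=
  (contDiff_infty_iff_deriv.mp hf).2
theorem Smooth.id : Smooth fun x : ℝ => x := contDiff_id

/-- The superalgebra `A = C^∞(ℝ^{1|2})`: elements `f₀ + f₁θ₁ + f₂θ₂ + f₁₂θ₁θ₂`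
with smooth coefficients. -/
structure SA where
  c0 : ℝ → ℝ
  c1 : ℝ → ℝ
  c2 : ℝ → ℝ
  c12 : ℝ → ℝ
  h0 : Smooth c0
  h1 : Smooth c1
  h2 : Smooth c2
  h12 : Smooth c12

namespace SA

instance : Zero SA :=
  ⟨⟨fun _ => 0, fun _ => 0, fun _ => 0, fun _ => 0,
    Smooth.const 0, Smooth.const 0, Smooth.const 0, Smooth.const 0⟩⟩

instance : One SA :=
  ⟨⟨fun _ => 1, fun _ => 0, fun _ => 0, fun _ => 0,
    Smooth.const 1, Smooth.const 0, Smooth.const 0, Smooth.const 0⟩⟩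

instance : Add SA :=
  ⟨fun f g => ⟨fun x => f.c0 x + g.c0 x, fun x => f.c1 x + g.c1 x,
    fun x => f.c2 x + g.c2 x, fun x => f.c12 x + g.c12 x,
    f.h0.add g.h0, f.h1.add g.h1, f.h2.add g.h2, f.h12.add g.h12⟩⟩

instance : Neg SA :=
  ⟨fun f => ⟨fun x => -(f.c0 x), fun x => -(f.c1 x), fun x => -(f.c2 x), fun x => -(f.c12 x),
    f.h0.neg, f.h1.neg, f.h2.neg, f.h12.neg⟩⟩

instance : Sub SA :=
  ⟨fun f g => ⟨fun x => f.c0 x - g.c0 x, fun x => f.c1 x - g.c1 x,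
    fun x => f.c2 x - g.c2 x, fun x => f.c12 x - g.c12 x,
    f.h0.sub g.h0, f.h1.sub g.h1, f.h2.sub g.h2, f.h12.sub g.h12⟩⟩

instance : SMul ℝ SA :=
  ⟨fun r f => ⟨fun x => r * f.c0 x, fun x => r * f.c1 x,
    fun x => r * f.c2 x, fun x => r * f.c12 x,
    f.h0.smul r, f.h1.smul r, f.h2.smul r, f.h12.smul r⟩⟩

/-- Supercommutative product determined by `θᵢθⱼ = -θⱼθᵢ`. -/
instance : Mul SA :=
  ⟨fun f g => ⟨fun x => f.c0 x * g.c0 x,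
    fun x => f.c0 x * g.c1 x + f.c1 x * g.c0 x,
    fun x => f.c0 x * g.c2 x + f.c2 x * g.c0 x,
    fun x => f.c0 x * g.c12 x + f.c12 x * g.c0 x + f.c1 x * g.c2 x - f.c2 x * g.c1 x,
    f.h0.mul g.h0,
    (f.h0.mul g.h1).add (f.h1.mul g.h0),
    (f.h0.mul g.h2).add (f.h2.mul g.h0),
    (((f.h0.mul g.h12).add (f.h12.mul g.h0)).add (f.h1.mul g.h2)).sub (f.h2.mul g.h1)⟩⟩

/-- The even coordinate `x`. -/
def xe : SA := ⟨fun x => x, fun _ => 0, fun _ => 0, fun _ => 0,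
  Smooth.id, Smooth.const 0, Smooth.const 0, Smooth.const 0⟩

/-- `x²`. -/
def xsq : SA := ⟨fun x => x * x, fun _ => 0, fun _ => 0, fun _ => 0,
  Smooth.id.mul Smooth.id, Smooth.const 0, Smooth.const 0, Smooth.const 0⟩

/-- `θ₁`. -/
def th1 : SA := ⟨fun _ => 0, fun _ => 1, fun _ => 0, fun _ => 0,
  Smooth.const 0, Smooth.const 1, Smooth.const 0, Smooth.const 0⟩

/-- `θ₂`. -/
def th2 : SA := ⟨fun _ => 0, fun _ => 0, fun _ => 1, fun _ => 0,
  Smooth.const 0, Smooth.const 0, Smooth.const 1, Smooth.const 0⟩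

/-- `xθ₁`. -/
def xth1 : SA := ⟨fun _ => 0, fun x => x, fun _ => 0, fun _ => 0,
  Smooth.const 0, Smooth.id, Smooth.const 0, Smooth.const 0⟩

/-- `xθ₂`. -/
def xth2 : SA := ⟨fun _ => 0, fun _ => 0, fun x => x, fun _ => 0,
  Smooth.const 0, Smooth.const 0, Smooth.id, Smooth.const 0⟩

/-- `θ₁θ₂`. -/
def th12 : SA := ⟨fun _ => 0, fun _ => 0, fun _ => 0, fun _ => 1,
  Smooth.const 0, Smooth.const 0, Smooth.const 0, Smooth.const 1⟩

/-- The even derivation `∂ₓ` (derivative of the coefficients). -/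
def dx (f : SA) : SA := ⟨deriv f.c0, deriv f.c1, deriv f.c2, deriv f.c12,
  f.h0.deriv, f.h1.deriv, f.h2.deriv, f.h12.deriv⟩

/-- The odd derivation `∂₁ = ∂/∂θ₁`. -/
def d1 (f : SA) : SA := ⟨f.c1, fun _ => 0, f.c12, fun _ => 0,
  f.h1, Smooth.const 0, f.h12, Smooth.const 0⟩

/-- The odd derivation `∂₂ = ∂/∂θ₂`. -/
def d2 (f : SA) : SA := ⟨f.c2, fun x => -(f.c12 x), fun _ => 0, fun _ => 0,
  f.h2, f.h12.neg, Smooth.const 0, Smooth.const 0⟩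

/-- `η̄₁ = ∂₁ - θ₁∂ₓ`. -/
def eta1 (f : SA) : SA := d1 f - th1 * dx f

/-- `η̄₂ = ∂₂ - θ₂∂ₓ`. -/
def eta2 (f : SA) : SA := d2 f - th2 * dx f

/-- `-∂ₓ` (so that `η̄ᵢ^{2j+1} = (-∂ₓ)^j ∘ η̄ᵢ`). -/
def ndx (f : SA) : SA := -(dx f)

/-- `f` is even: no `θ₁`, `θ₂` components. -/
def IsEven (f : SA) : Prop := (∀ x, f.c1 x = 0) ∧ (∀ x, f.c2 x = 0)

/-- `f` is odd: no `1`, `θ₁θ₂` components. -/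
def IsOdd (f : SA) : Prop := (∀ x, f.c0 x = 0) ∧ (∀ x, f.c12 x = 0)

/-- The sign `(-1)^p` of a parity `p` (`false` = even, `true` = odd). -/
def sgn (p : Bool) : ℝ := if p then -1 else 1

/-- `f` is homogeneous of parity `p`. -/
def Homog (p : Bool) (f : SA) : Prop := if p then IsOdd f else IsEven f

/-- The contact (Poisson) bracket `{f,g}` for `f` homogeneous of parity `p`:
`{f,g} = fg' - f'g - ½(-1)^{|f|}(η̄₁(f)η̄₁(g) + η̄₂(f)η̄₂(g))`. -/
def cbr (p : Bool) (f g : SA) : SA :=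
  f * dx g - dx f * g - (sgn p / 2) • (eta1 f * eta1 g + eta2 f * eta2 g)

/-- Even part of `f`. -/
def evenPart (f : SA) : SA := ⟨f.c0, fun _ => 0, fun _ => 0, f.c12,
  f.h0, Smooth.const 0, Smooth.const 0, f.h12⟩

/-- Odd part of `f`. -/
def oddPart (f : SA) : SA := ⟨fun _ => 0, f.c1, f.c2, fun _ => 0,
  Smooth.const 0, f.h1, f.h2, Smooth.const 0⟩

/-- The contact bracket extended bilinearly to all of `A`. -/
def cbrT (f g : SA) : SA := cbr false (evenPart f) g + cbr true (oddPart f) g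

/-- Membership in `𝔬𝔰𝔭(2|2) = Span(1, x, x², θ₁, θ₂, xθ₁, xθ₂, θ₁θ₂)`. -/
def memOsp (f : SA) : Prop :=
  ∃ a b c d e p q r : ℝ,
    f = a • (1 : SA) + b • xe + c • xsq + d • th1 + e • th2
      + p • xth1 + q • xth2 + r • th12

/-- The action `𝔏^λ_f` on λ-densities, for `f` homogeneous of parity `p`. -/
def Ld (lam : ℝ) (p : Bool) (f g : SA) : SA :=
  f * dx g + lam • (dx f * g) - (sgn p / 2) • (eta1 f * eta1 g + eta2 f * eta2 g)

/-- The `(λ,μ)`-action of homogeneous `f` (parity `p`) on a homogeneous operator `T`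
(parity `t`): `f·T = 𝔏^μ_f ∘ T - (-1)^{|f||T|} T ∘ 𝔏^λ_f`. -/
def act (lam mu : ℝ) (p t : Bool) (f : SA) (T : SA → SA) : SA → SA :=
  fun h => Ld mu p f (T h) - sgn (p && t) • T (Ld lam p f h)

/-- The 1-cochain `ω(f) = m_{f'}`. -/
def om (f : SA) : SA → SA := fun h => dx f * h

/-- The 1-cochain
`ω̃_λ(f) = 2λ m_{η̄₁(∂₂f)} - (-1)^{|f|}(m_{∂₂f}∘η̄₁ + m_{θ₂η̄₂η̄₁(f)}∘η̄₂)`. -/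
def omt (lam : ℝ) (p : Bool) (f : SA) : SA → SA := fun h =>
  (2 * lam) • (eta1 (d2 f) * h)
    - sgn p • (d2 f * eta1 h + (th2 * eta2 (eta1 f)) * eta2 h)

/-- The 1-cochain `γ̃₀(f) = m_{η̄₁η̄₂(f)}`. -/
def gamt0 (f : SA) : SA → SA := fun h => eta1 (eta2 f) * h

/-- The 1-cochain `Γ_k(f) = m_{f'}∘η̄₁∘η̄₂^{2k-1}`. -/
def Gam (k : ℕ) (f : SA) : SA → SA := fun h => dx f * eta1 (ndx^[k - 1] (eta2 h))

/-- The 1-cochain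
`Γ̃_k(f) = k m_{η̄₁(∂₂f)}∘η̄₁∘η̄₂^{2k-1} - (-1)^{|f|}(m_{∂₂f}∘η̄₂^{2k+1} - m_{η̄₁(θ₂∂₂f)}∘η̄₁^{2k+1})`. -/
def GamT (k : ℕ) (p : Bool) (f : SA) : SA → SA := fun h =>
  (k : ℝ) • (eta1 (d2 f) * eta1 (ndx^[k - 1] (eta2 h)))
    - sgn p • (d2 f * ndx^[k] (eta2 h) - eta1 (th2 * d2 f) * ndx^[k] (eta1 h))

/-- The 1-cochain
`Γ̄_k(f) = (k-1) m_{f''}∘η̄₁∘η̄₂^{2k-3} + (-1)^{|f|}(m_{η̄₂(f')}∘η̄₁^{2k-1} - m_{η̄₁(f')}∘η̄₂^{2k-1})`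
(the first term is absent for `k = 1`, its coefficient being `0`). -/
def GamB (k : ℕ) (p : Bool) (f : SA) : SA → SA := fun h =>
  ((k : ℝ) - 1) • (dx (dx f) * eta1 (ndx^[k - 2] (eta2 h)))
    + sgn p • (eta2 (dx f) * ndx^[k - 1] (eta1 h) - eta1 (dx f) * ndx^[k - 1] (eta2 h))

/-- An operator on `A` is even if it preserves parities. -/
def OpEven (T : SA → SA) : Prop :=
  (∀ g, IsEven g → IsEven (T g)) ∧ (∀ g, IsOdd g → IsOdd (T g))

/-- An operator on `A` is odd if it reverses parities. -/
def OpOdd (T : SA → SA) : Prop :=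
  (∀ g, IsEven g → IsOdd (T g)) ∧ (∀ g, IsOdd g → IsEven (T g))

/-- An operator is homogeneous of parity `p`. -/
def OpHomog (p : Bool) (T : SA → SA) : Prop := if p then OpOdd T else OpEven T

/-- The monomial differential operator `m_A ∘ ∂ₓ^i ∘ ∂₁^j ∘ ∂₂^l`. -/
def mono (A : SA) (i : ℕ) (j l : Bool) (g : SA) : SA :=
  A * dx^[i] ((if j then d1 else id) ((if l then d2 else id) g))

/-- A differential operator on `A` is a finite sum `Σ m_{A_{ijl}}∘∂ₓ^i∘∂₁^j∘∂₂^l`. -/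
def IsDiffOp (T : SA → SA) : Prop :=
  ∃ L : List (SA × ℕ × Bool × Bool),
    T = fun g => (L.map fun t => mono t.1 t.2.1 t.2.2.1 t.2.2.2 g).sum

/-- Supercommutator `[S,T] = S∘T - (-1)^{|S||T|} T∘S`, with the sign `s = (-1)^{|S||T|}`
given explicitly. -/
def scomm {M : Type*} [Sub M] [SMul ℝ M] (s : ℝ) (S T : M → M) : M → M :=
  fun v => S (T v) - s • T (S v)

/-- Cup product of two even 1-cochains on homogeneous arguments of parities `p`, `q`:
`(a∨b)(f,g) = [a(f),b(g)] + [b(f),a(g)]`. -/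
def cup {M : Type*} [Sub M] [SMul ℝ M] [Add M] (p q : Bool)
    (a b : Bool → SA → M → M) (f g : SA) : M → M :=
  fun v => scomm (sgn (p && q)) (a p f) (b q g) v + scomm (sgn (p && q)) (b p f) (a q g) v

/-! Operators on `𝔉_{-k/2} ⊕ 𝔉_{k/2}`, modelled as `SA × SA`
(first factor `𝔉_{-k/2}`, second factor `𝔉_{k/2}`). -/

/-- `γ_k = ω` acting on the summand `𝔉_{k/2}`, extended by zero. -/
def gamP (_ : Bool) (f : SA) : SA × SA → SA × SA := fun v => (0, om f v.2)

/-- `γ_{-k} = ω` acting on the summand `𝔉_{-k/2}`, extended by zero. -/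
def gamM (_ : Bool) (f : SA) : SA × SA → SA × SA := fun v => (om f v.1, 0)

/-- `γ̃_k = ω̃_{k/2}` acting on the summand `𝔉_{k/2}`, extended by zero. -/
def gamtP (k : ℕ) (p : Bool) (f : SA) : SA × SA → SA × SA :=
  fun v => (0, omt ((k : ℝ) / 2) p f v.2)

/-- `γ̃_{-k} = ω̃_{-k/2}` acting on the summand `𝔉_{-k/2}`, extended by zero. -/
def gamtM (k : ℕ) (p : Bool) (f : SA) : SA × SA → SA × SA :=
  fun v => (omt (-(k : ℝ) / 2) p f v.1, 0)

/-- `Γ_k` viewed as an operator from `𝔉_{-k/2}` to `𝔉_{k/2}`. -/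
def GamP (k : ℕ) (_ : Bool) (f : SA) : SA × SA → SA × SA := fun v => (0, Gam k f v.1)

/-- `Γ̃_k` viewed as an operator from `𝔉_{-k/2}` to `𝔉_{k/2}`. -/
def GamTP (k : ℕ) (p : Bool) (f : SA) : SA × SA → SA × SA := fun v => (0, GamT k p f v.1)

/-- `Γ̄_k` viewed as an operator from `𝔉_{-k/2}` to `𝔉_{k/2}`. -/
def GamBP (k : ℕ) (p : Bool) (f : SA) : SA × SA → SA × SA := fun v => (0, GamB k p f v.1)

/-- The undeformed action `𝕃_f = 𝔏^{-k/2}_f ⊕ 𝔏^{k/2}_f` on `𝔉_{-k/2} ⊕ 𝔉_{k/2}`. -/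
def LL (k : ℕ) (p : Bool) (f : SA) : SA × SA → SA × SA :=
  fun v => (Ld (-(k : ℝ) / 2) p f v.1, Ld ((k : ℝ) / 2) p f v.2)

/-- The action of homogeneous `f` (parity `p`) on a homogeneous operator `T` (parity `t`)
on `𝔉_{-k/2} ⊕ 𝔉_{k/2}`: `f·T = [𝕃_f, T]`. -/
def actP (k : ℕ) (p t : Bool) (f : SA) (T : SA × SA → SA × SA) : SA × SA → SA × SA :=
  fun v => LL k p f (T v) - sgn (p && t) • T (LL k p f v)

/-- Parity predicates on `𝔉_{-k/2} ⊕ 𝔉_{k/2}`. -/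
def IsEvenP (v : SA × SA) : Prop := IsEven v.1 ∧ IsEven v.2

def IsOddP (v : SA × SA) : Prop := IsOdd v.1 ∧ IsOdd v.2

def OpEvenP (T : SA × SA → SA × SA) : Prop :=
  (∀ v, IsEvenP v → IsEvenP (T v)) ∧ (∀ v, IsOddP v → IsOddP (T v))

def OpOddP (T : SA × SA → SA × SA) : Prop :=
  (∀ v, IsEvenP v → IsOddP (T v)) ∧ (∀ v, IsOddP v → IsEvenP (T v))

def OpHomogP (p : Bool) (T : SA × SA → SA × SA) : Prop := if p then OpOddP T else OpEvenP T

/-- A differential-operator-valued endomorphism of `𝔉_{-k/2} ⊕ 𝔉_{k/2}`: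
a 2×2 block matrix of differential operators. -/
def IsDiffOpP (T : SA × SA → SA × SA) : Prop :=
  ∃ T11 T12 T21 T22 : SA → SA,
    IsDiffOp T11 ∧ IsDiffOp T12 ∧ IsDiffOp T21 ∧ IsDiffOp T22 ∧
    T = fun v => (T11 v.1 + T12 v.2, T21 v.1 + T22 v.2)

/-- A differential operator from `𝔉_{-k/2}` to `𝔉_{k/2}`, as an endomorphism of the sum. -/
def IsDiffOpLower (T : SA × SA → SA × SA) : Prop :=
  ∃ D : SA → SA, IsDiffOp D ∧ T = fun v => (0, D v.1)

end SA

end OSP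
namespace OSP
namespace SA

theorem Smooth.diff {f : ℝ → ℝ} (hf : Smooth f) : Differentiable ℝ f :=
  hf.differentiable (by simp)

theorem extSA {f g : SA} (e0 : ∀ x, f.c0 x = g.c0 x) (e1 : ∀ x, f.c1 x = g.c1 x)
    (e2 : ∀ x, f.c2 x = g.c2 x) (e12 : ∀ x, f.c12 x = g.c12 x) : f = g := by
  cases f; cases g
  simp only [SA.mk.injEq] at *
  exact ⟨funext e0, funext e1, funext e2, funext e12⟩

section CompLemmas
variable (f g : SA) (r : ℝ)

@[simp] theorem mul_c0 : (f * g).c0 = fun x => f.c0 x * g.c0 x := rfl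
@[simp] theorem mul_c1 : (f * g).c1 = fun x => f.c0 x * g.c1 x + f.c1 x * g.c0 x := rfl
@[simp] theorem mul_c2 : (f * g).c2 = fun x => f.c0 x * g.c2 x + f.c2 x * g.c0 x := rfl
@[simp] theorem mul_c12 : (f * g).c12 =
    fun x => f.c0 x * g.c12 x + f.c12 x * g.c0 x + f.c1 x * g.c2 x - f.c2 x * g.c1 x := rfl
@[simp] theorem add_c0 : (f + g).c0 = fun x => f.c0 x + g.c0 x := rfl
@[simp] theorem add_c1 : (f + g).c1 = fun x => f.c1 x + g.c1 x := rfl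
@[simp] theorem add_c2 : (f + g).c2 = fun x => f.c2 x + g.c2 x := rfl
@[simp] theorem add_c12 : (f + g).c12 = fun x => f.c12 x + g.c12 x := rfl
@[simp] theorem sub_c0 : (f - g).c0 = fun x => f.c0 x - g.c0 x := rfl
@[simp] theorem sub_c1 : (f - g).c1 = fun x => f.c1 x - g.c1 x := rfl
@[simp] theorem sub_c2 : (f - g).c2 = fun x => f.c2 x - g.c2 x := rfl
@[simp] theorem sub_c12 : (f - g).c12 = fun x => f.c12 x - g.c12 x := rfl
@[simp] theorem smul_c0 : (r • f).c0 = fun x => r * f.c0 x := rfl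
@[simp] theorem smul_c1 : (r • f).c1 = fun x => r * f.c1 x := rfl
@[simp] theorem smul_c2 : (r • f).c2 = fun x => r * f.c2 x := rfl
@[simp] theorem smul_c12 : (r • f).c12 = fun x => r * f.c12 x := rfl
@[simp] theorem one_c0 : (1 : SA).c0 = fun _ => (1 : ℝ) := rfl
@[simp] theorem one_c1 : (1 : SA).c1 = fun _ => (0 : ℝ) := rfl
@[simp] theorem one_c2 : (1 : SA).c2 = fun _ => (0 : ℝ) := rfl
@[simp] theorem one_c12 : (1 : SA).c12 = fun _ => (0 : ℝ) := rfl
@[simp] theorem dx_c0 : (dx f).c0 = deriv f.c0 := rfl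
@[simp] theorem dx_c1 : (dx f).c1 = deriv f.c1 := rfl
@[simp] theorem dx_c2 : (dx f).c2 = deriv f.c2 := rfl
@[simp] theorem dx_c12 : (dx f).c12 = deriv f.c12 := rfl
@[simp] theorem d1_c0 : (d1 f).c0 = f.c1 := rfl
@[simp] theorem d1_c1 : (d1 f).c1 = fun _ => (0 : ℝ) := rfl
@[simp] theorem d1_c2 : (d1 f).c2 = f.c12 := rfl
@[simp] theorem d1_c12 : (d1 f).c12 = fun _ => (0 : ℝ) := rfl
@[simp] theorem d2_c0 : (d2 f).c0 = f.c2 := rfl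
@[simp] theorem d2_c1 : (d2 f).c1 = fun x => -(f.c12 x) := rfl
@[simp] theorem d2_c2 : (d2 f).c2 = fun _ => (0 : ℝ) := rfl
@[simp] theorem d2_c12 : (d2 f).c12 = fun _ => (0 : ℝ) := rfl
@[simp] theorem th1_c0 : th1.c0 = fun _ => (0 : ℝ) := rfl
@[simp] theorem th1_c1 : th1.c1 = fun _ => (1 : ℝ) := rfl
@[simp] theorem th1_c2 : th1.c2 = fun _ => (0 : ℝ) := rfl
@[simp] theorem th1_c12 : th1.c12 = fun _ => (0 : ℝ) := rfl
@[simp] theorem th2_c0 : th2.c0 = fun _ => (0 : ℝ) := rfl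
@[simp] theorem th2_c1 : th2.c1 = fun _ => (0 : ℝ) := rfl
@[simp] theorem th2_c2 : th2.c2 = fun _ => (1 : ℝ) := rfl
@[simp] theorem th2_c12 : th2.c12 = fun _ => (0 : ℝ) := rfl
@[simp] theorem xe_c0 : xe.c0 = fun x => x := rfl
@[simp] theorem xe_c1 : xe.c1 = fun _ => (0 : ℝ) := rfl
@[simp] theorem xe_c2 : xe.c2 = fun _ => (0 : ℝ) := rfl
@[simp] theorem xe_c12 : xe.c12 = fun _ => (0 : ℝ) := rfl
@[simp] theorem xsq_c0 : xsq.c0 = fun x => x * x := rfl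
@[simp] theorem xsq_c1 : xsq.c1 = fun _ => (0 : ℝ) := rfl
@[simp] theorem xsq_c2 : xsq.c2 = fun _ => (0 : ℝ) := rfl
@[simp] theorem xsq_c12 : xsq.c12 = fun _ => (0 : ℝ) := rfl
@[simp] theorem xth1_c0 : xth1.c0 = fun _ => (0 : ℝ) := rfl
@[simp] theorem xth1_c1 : xth1.c1 = fun x => x := rfl
@[simp] theorem xth1_c2 : xth1.c2 = fun _ => (0 : ℝ) := rfl
@[simp] theorem xth1_c12 : xth1.c12 = fun _ => (0 : ℝ) := rfl
@[simp] theorem xth2_c0 : xth2.c0 = fun _ => (0 : ℝ) := rfl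
@[simp] theorem xth2_c1 : xth2.c1 = fun _ => (0 : ℝ) := rfl
@[simp] theorem xth2_c2 : xth2.c2 = fun x => x := rfl
@[simp] theorem xth2_c12 : xth2.c12 = fun _ => (0 : ℝ) := rfl
@[simp] theorem th12_c0 : th12.c0 = fun _ => (0 : ℝ) := rfl
@[simp] theorem th12_c1 : th12.c1 = fun _ => (0 : ℝ) := rfl
@[simp] theorem th12_c2 : th12.c2 = fun _ => (0 : ℝ) := rfl
@[simp] theorem th12_c12 : th12.c12 = fun _ => (1 : ℝ) := rfl

end CompLemmas

/-- Generic even element of `𝔬𝔰𝔭(2|2)`. -/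
def F0 (a b c r : ℝ) : SA :=
  ⟨fun x => a + b * x + c * (x * x), fun _ => 0, fun _ => 0, fun _ => r,
    ((Smooth.const a).add ((Smooth.const b).mul Smooth.id)).add
      ((Smooth.const c).mul (Smooth.id.mul Smooth.id)),
    Smooth.const 0, Smooth.const 0, Smooth.const r⟩

/-- Generic odd element of `𝔬𝔰𝔭(2|2)`. -/
def F1 (d e u v : ℝ) : SA :=
  ⟨fun _ => 0, fun x => d + u * x, fun x => e + v * x, fun _ => 0,
    Smooth.const 0,
    (Smooth.const d).add ((Smooth.const u).mul Smooth.id),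
    (Smooth.const e).add ((Smooth.const v).mul Smooth.id),
    Smooth.const 0⟩

@[simp] theorem F0_c0 (a b c r : ℝ) : (F0 a b c r).c0 = fun x => a + b * x + c * (x * x) := rfl
@[simp] theorem F0_c1 (a b c r : ℝ) : (F0 a b c r).c1 = fun _ => (0 : ℝ) := rfl
@[simp] theorem F0_c2 (a b c r : ℝ) : (F0 a b c r).c2 = fun _ => (0 : ℝ) := rfl
@[simp] theorem F0_c12 (a b c r : ℝ) : (F0 a b c r).c12 = fun _ => r := rfl
@[simp] theorem F1_c0 (d e u v : ℝ) : (F1 d e u v).c0 = fun _ => (0 : ℝ) := rfl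
@[simp] theorem F1_c1 (d e u v : ℝ) : (F1 d e u v).c1 = fun x => d + u * x := rfl
@[simp] theorem F1_c2 (d e u v : ℝ) : (F1 d e u v).c2 = fun x => e + v * x := rfl
@[simp] theorem F1_c12 (d e u v : ℝ) : (F1 d e u v).c12 = fun _ => (0 : ℝ) := rfl

theorem even_form {f : SA} (hp : IsEven f) (hf : memOsp f) :
    ∃ a b c r : ℝ, f = F0 a b c r := by
  obtain ⟨a, b, c, d, e, u, v, r, hfe⟩ := hf
  refine ⟨a, b, c, r, extSA ?_ ?_ ?_ ?_⟩ <;> intro x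
  · rw [hfe]; simp
  · simpa using hp.1 x
  · simpa using hp.2 x
  · rw [hfe]; simp

theorem odd_form {f : SA} (hp : IsOdd f) (hf : memOsp f) :
    ∃ d e u v : ℝ, f = F1 d e u v := by
  obtain ⟨a, b, c, d, e, u, v, r, hfe⟩ := hf
  refine ⟨d, e, u, v, extSA ?_ ?_ ?_ ?_⟩ <;> intro x
  · simpa using hp.1 x
  · rw [hfe]; simp
  · rw [hfe]; simp
  · simpa using hp.2 x

theorem deriv_hmul (cc : ℝ) : deriv (HMul.hMul cc) = fun _ => cc := by
  funext x
  have h : HMul.hMul cc = fun y : ℝ => cc * y := rfl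
  rw [h, deriv_const_mul_field, deriv_id'']
  simp

set_option maxHeartbeats 12000000 in
/-- sufficiency, case `2d ∉ ℕ`: for every `λ` and `t`, the deformed
action `f ↦ 𝔏^λ_f + t·m_{f'}` satisfies the homomorphism condition on `𝔬𝔰𝔭(2|2)`:
the infinitesimal deformation along `ω(f) = m_{f'}` is a genuine deformation,
of order 1 in `t`. -/
theorem deformation_along_om_integrates :
    ∀ (lam t : ℝ) (p q : Bool) (f g : SA),
      Homog p f → Homog q g → memOsp f → memOsp g →
      ∀ h : SA,
        Ld lam (p ^^ q) (cbr p f g) h + t • (dx (cbr p f g) * h)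
          = (Ld lam p f (Ld lam q g h + t • (dx g * h))
              + t • (dx f * (Ld lam q g h + t • (dx g * h))))
            - sgn (p && q) • (Ld lam q g (Ld lam p f h + t • (dx f * h))
              + t • (dx g * (Ld lam p f h + t • (dx f * h)))) := by
  intro lam t p q f g hp hq hf hg h
  have H0 : Differentiable ℝ h.c0 := Smooth.diff h.h0
  have H1 : Differentiable ℝ h.c1 := Smooth.diff h.h1
  have H2 : Differentiable ℝ h.c2 := Smooth.diff h.h2
  have H12 : Differentiable ℝ h.c12 := Smooth.diff h.h12
  have D0 : Differentiable ℝ (deriv h.c0) := Smooth.diff (Smooth.deriv h.h0)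
  have D1 : Differentiable ℝ (deriv h.c1) := Smooth.diff (Smooth.deriv h.h1)
  have D2 : Differentiable ℝ (deriv h.c2) := Smooth.diff (Smooth.deriv h.h2)
  have D12 : Differentiable ℝ (deriv h.c12) := Smooth.diff (Smooth.deriv h.h12)
  cases p <;> cases q
  · obtain ⟨a, b, c, r, rfl⟩ := even_form (by simpa [Homog] using hp) hf
    obtain ⟨a', b', c', r', rfl⟩ := even_form (by simpa [Homog] using hq) hg
    refine extSA ?_ ?_ ?_ ?_ <;> intro x <;>
      simp only [Ld, cbr, eta1, eta2, sgn, Bool.xor_false, Bool.false_xor, Bool.xor_self,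
        Bool.true_xor, Bool.xor_true, Bool.false_and, Bool.and_false, Bool.true_and,
        Bool.and_true, reduceIte, Bool.not_false, Bool.not_true, Bool.false_eq_true, eq_self_iff_true, if_true, if_false, mul_c0, mul_c1, mul_c2, mul_c12, add_c0, add_c1,
        add_c2, add_c12, sub_c0, sub_c1, sub_c2, sub_c12, smul_c0, smul_c1, smul_c2, smul_c12,
        dx_c0, dx_c1, dx_c2, dx_c12, d1_c0, d1_c1, d1_c2, d1_c12, d2_c0, d2_c1, d2_c2, d2_c12,
        th1_c0, th1_c1, th1_c2, th1_c12, th2_c0, th2_c1, th2_c2, th2_c12,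
        F0_c0, F0_c1, F0_c2, F0_c12, F1_c0, F1_c1, F1_c2, F1_c12, deriv_hmul,
        zero_mul, mul_zero, zero_add, add_zero, sub_zero, zero_sub, neg_zero, neg_neg,
        one_mul, mul_one, deriv_const'] <;>
      simp (disch := fun_prop) only [deriv_fun_add, deriv_fun_sub, deriv_fun_mul, deriv_const',
        deriv_id'', deriv_hmul, deriv.fun_neg, Bool.not_false, Bool.not_true, Bool.false_eq_true, eq_self_iff_true, if_true, if_false, zero_mul, mul_zero, zero_add, add_zero, sub_zero,
        zero_sub, neg_zero, neg_neg, one_mul, mul_one] <;>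
      ring
  · obtain ⟨a, b, c, r, rfl⟩ := even_form (by simpa [Homog] using hp) hf
    obtain ⟨d', e', u', v', rfl⟩ := odd_form (by simpa [Homog] using hq) hg
    refine extSA ?_ ?_ ?_ ?_ <;> intro x <;>
      simp only [Ld, cbr, eta1, eta2, sgn, Bool.xor_false, Bool.false_xor, Bool.xor_self,
        Bool.true_xor, Bool.xor_true, Bool.false_and, Bool.and_false, Bool.true_and,
        Bool.and_true, reduceIte, Bool.not_false, Bool.not_true, Bool.false_eq_true, eq_self_iff_true, if_true, if_false, mul_c0, mul_c1, mul_c2, mul_c12, add_c0, add_c1,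
        add_c2, add_c12, sub_c0, sub_c1, sub_c2, sub_c12, smul_c0, smul_c1, smul_c2, smul_c12,
        dx_c0, dx_c1, dx_c2, dx_c12, d1_c0, d1_c1, d1_c2, d1_c12, d2_c0, d2_c1, d2_c2, d2_c12,
        th1_c0, th1_c1, th1_c2, th1_c12, th2_c0, th2_c1, th2_c2, th2_c12,
        F0_c0, F0_c1, F0_c2, F0_c12, F1_c0, F1_c1, F1_c2, F1_c12, deriv_hmul,
        zero_mul, mul_zero, zero_add, add_zero, sub_zero, zero_sub, neg_zero, neg_neg,
        one_mul, mul_one, deriv_const'] <;>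
      simp (disch := fun_prop) only [deriv_fun_add, deriv_fun_sub, deriv_fun_mul, deriv_const',
        deriv_id'', deriv_hmul, deriv.fun_neg, Bool.not_false, Bool.not_true, Bool.false_eq_true, eq_self_iff_true, if_true, if_false, zero_mul, mul_zero, zero_add, add_zero, sub_zero,
        zero_sub, neg_zero, neg_neg, one_mul, mul_one] <;>
      ring
  · obtain ⟨d, e, u, v, rfl⟩ := odd_form (by simpa [Homog] using hp) hf
    obtain ⟨a', b', c', r', rfl⟩ := even_form (by simpa [Homog] using hq) hg
    refine extSA ?_ ?_ ?_ ?_ <;> intro x <;>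
      simp only [Ld, cbr, eta1, eta2, sgn, Bool.xor_false, Bool.false_xor, Bool.xor_self,
        Bool.true_xor, Bool.xor_true, Bool.false_and, Bool.and_false, Bool.true_and,
        Bool.and_true, reduceIte, Bool.not_false, Bool.not_true, Bool.false_eq_true, eq_self_iff_true, if_true, if_false, mul_c0, mul_c1, mul_c2, mul_c12, add_c0, add_c1,
        add_c2, add_c12, sub_c0, sub_c1, sub_c2, sub_c12, smul_c0, smul_c1, smul_c2, smul_c12,
        dx_c0, dx_c1, dx_c2, dx_c12, d1_c0, d1_c1, d1_c2, d1_c12, d2_c0, d2_c1, d2_c2, d2_c12,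
        th1_c0, th1_c1, th1_c2, th1_c12, th2_c0, th2_c1, th2_c2, th2_c12,
        F0_c0, F0_c1, F0_c2, F0_c12, F1_c0, F1_c1, F1_c2, F1_c12, deriv_hmul,
        zero_mul, mul_zero, zero_add, add_zero, sub_zero, zero_sub, neg_zero, neg_neg,
        one_mul, mul_one, deriv_const'] <;>
      simp (disch := fun_prop) only [deriv_fun_add, deriv_fun_sub, deriv_fun_mul, deriv_const',
        deriv_id'', deriv_hmul, deriv.fun_neg, Bool.not_false, Bool.not_true, Bool.false_eq_true, eq_self_iff_true, if_true, if_false, zero_mul, mul_zero, zero_add, add_zero, sub_zero,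
        zero_sub, neg_zero, neg_neg, one_mul, mul_one] <;>
      ring
  · obtain ⟨d, e, u, v, rfl⟩ := odd_form (by simpa [Homog] using hp) hf
    obtain ⟨d', e', u', v', rfl⟩ := odd_form (by simpa [Homog] using hq) hg
    refine extSA ?_ ?_ ?_ ?_ <;> intro x <;>
      simp only [Ld, cbr, eta1, eta2, sgn, Bool.xor_false, Bool.false_xor, Bool.xor_self,
        Bool.true_xor, Bool.xor_true, Bool.false_and, Bool.and_false, Bool.true_and,
        Bool.and_true, reduceIte, Bool.not_false, Bool.not_true, Bool.false_eq_true, eq_self_iff_true, if_true, if_false, mul_c0, mul_c1, mul_c2, mul_c12, add_c0, add_c1,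
        add_c2, add_c12, sub_c0, sub_c1, sub_c2, sub_c12, smul_c0, smul_c1, smul_c2, smul_c12,
        dx_c0, dx_c1, dx_c2, dx_c12, d1_c0, d1_c1, d1_c2, d1_c12, d2_c0, d2_c1, d2_c2, d2_c12,
        th1_c0, th1_c1, th1_c2, th1_c12, th2_c0, th2_c1, th2_c2, th2_c12,
        F0_c0, F0_c1, F0_c2, F0_c12, F1_c0, F1_c1, F1_c2, F1_c12, deriv_hmul,
        zero_mul, mul_zero, zero_add, add_zero, sub_zero, zero_sub, neg_zero, neg_neg,
        one_mul, mul_one, deriv_const'] <;>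
      simp (disch := fun_prop) only [deriv_fun_add, deriv_fun_sub, deriv_fun_mul, deriv_const',
        deriv_id'', deriv_hmul, deriv.fun_neg, Bool.not_false, Bool.not_true, Bool.false_eq_true, eq_self_iff_true, if_true, if_false, zero_mul, mul_zero, zero_add, add_zero, sub_zero,
        zero_sub, neg_zero, neg_neg, one_mul, mul_one] <;>
      ring

end SA
end OSP
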